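/- Every sandwich function Ψ gives rise to a packing bound function A as follows: for a bounded Borel subset C of ℝ^d, let G(C) be the graph with vertex set C and an edge between distinct x, y ∈ C exactly when |x − y| ≥ 2, and set A(C) = Ψ(G(C)). Then A satisfies the sphere bound, Lipschitz, union, and mesh axioms of a packing bound function. -/

import Mathlib

open scoped Pointwise
open MeasureTheory Bornology Filter

/-- The join `G * H` of two graphs: the disjoint union of `G` and `H` together with all
edges between the two parts. -/
def graphJoin {V W : Type} (G : SimpleGraph V) (H : SimpleGraph W) :
    SimpleGraph (V ⊕ W) where
  Adj x y := match x, y with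
    | Sum.inl a, Sum.inl b => G.Adj a b
    | Sum.inr a, Sum.inr b => H.Adj a b
    | Sum.inl _, Sum.inr _ => True
    | Sum.inr _, Sum.inl _ => True
  symm := ⟨fun x y => match x, y with
    | Sum.inl _, Sum.inl _ => fun h => G.adj_symm h
    | Sum.inr _, Sum.inr _ => fun h => H.adj_symm h
    | Sum.inl _, Sum.inr _ => fun _ => trivial
    | Sum.inr _, Sum.inl _ => fun _ => trivial⟩
  loopless := ⟨fun x => by cases x <;> simp⟩

/-- A sandwich function: an assignment of a nonnegative real number to every graph with
finite chromatic number, taking the value `0` on empty graphs and `1` on one-point graphs,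
monotone under graph homomorphisms, and additive under joins. -/
structure SandwichFunction where
  toFun : ∀ {V : Type}, SimpleGraph V → ℝ
  nonneg : ∀ {V : Type} (G : SimpleGraph V), G.chromaticNumber ≠ ⊤ → 0 ≤ toFun G
  empty_eq : ∀ {V : Type} (G : SimpleGraph V), IsEmpty V → toFun G = 0
  single_eq : ∀ {V : Type} (G : SimpleGraph V), Nonempty V → Subsingleton V → toFun G = 1
  mono : ∀ {V W : Type} (G : SimpleGraph V) (H : SimpleGraph W),
    G.chromaticNumber ≠ ⊤ → H.chromaticNumber ≠ ⊤ → (G →g H) → toFun G ≤ toFun H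
  join_add : ∀ {V W : Type} (G : SimpleGraph V) (H : SimpleGraph W),
    G.chromaticNumber ≠ ⊤ → H.chromaticNumber ≠ ⊤ →
    toFun (graphJoin G H) = toFun G + toFun H

/-- The graph on a subset `C` of a metric space whose edges are the pairs of (distinct)
points at distance at least 2. -/
def farGraph {E : Type} [MetricSpace E] (C : Set E) : SimpleGraph C where
  Adj x y := x ≠ y ∧ 2 ≤ dist (x : E) (y : E)
  symm := ⟨fun x y h => ⟨h.1.symm, by rw [dist_comm]; exact h.2⟩⟩
  loopless := ⟨fun x h => h.1 rfl⟩

/-!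
Every axiom is witnessed by graph homomorphisms between the graphs `G(C)`. A bounded set of
`ℝ^d` is covered by finitely many open unit balls, and colouring each point by the centre of a
ball containing it is proper, so `G(C)` has finite chromatic number and `Ψ` applies. A point set
inside an open unit ball has no edges; a distance-expanding map is a homomorphism; for
`2`-separated `C`, `C'` the graph `G(C ∪ C')` is the join of `G(C)` and `G(C')`; and sending
`x ∈ C / (1 + ε)` to a point of `C'` within `ε` of `(1 + ε) x` turns distance `≥ 2` into
distance `> 2 + 2ε - 2ε = 2`.
-/

open Metric

section FarGraph

variable {E F : Type} [MetricSpace E] [MetricSpace F]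

theorem farGraph_adj {C : Set E} {x y : C} : (farGraph C).Adj x y ↔ 2 ≤ dist (x : E) y := by
  refine ⟨And.right, fun h => ⟨fun hxy => ?_, h⟩⟩
  rw [hxy, dist_self] at h
  norm_num at h

def farGraphHom {C : Set E} {C' : Set F} (f : C → C')
    (hf : ∀ x y : C, 2 ≤ dist (x : E) y → 2 ≤ dist (f x : F) (f y)) :
    farGraph C →g farGraph C' where
  toFun := f
  map_rel' h := farGraph_adj.mpr (hf _ _ (farGraph_adj.mp h))

theorem farGraph_eq_bot_of_subset_ball {C : Set E} {z : E} (hC : C ⊆ ball z 1) :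
    farGraph C = ⊥ := by
  ext x y
  simp only [farGraph_adj, SimpleGraph.bot_adj, iff_false, not_le]
  calc dist (x : E) y ≤ dist (x : E) z + dist (y : E) z := dist_triangle_right _ _ _
    _ < 1 + 1 := add_lt_add (hC x.2) (hC y.2)
    _ = 2 := one_add_one_eq_two

theorem TotallyBounded.farGraph_chromaticNumber_ne_top {C : Set E} (hC : TotallyBounded C) :
    (farGraph C).chromaticNumber ≠ ⊤ := by
  obtain ⟨t, ht, hCt⟩ := totallyBounded_iff.mp hC 1 one_pos
  have : Fintype t := ht.fintype
  have hcentre (x : C) : ∃ y : t, dist (x : E) y < 1 := by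
    obtain ⟨y, hy, hxy⟩ := Set.mem_iUnion₂.mp (hCt x.2)
    exact ⟨⟨y, hy⟩, hxy⟩
  choose c hc using hcentre
  refine SimpleGraph.chromaticNumber_ne_top_iff_exists.mpr
    ⟨_, (SimpleGraph.Coloring.mk c fun {x y} hxy hcxy => ?_).colorable⟩
  have hcx := hc x
  rw [hcxy] at hcx
  linarith [farGraph_adj.mp hxy, hc y, dist_triangle_right (x : E) y (c y)]

theorem Bornology.IsBounded.farGraph_chromaticNumber_ne_top [ProperSpace E] {C : Set E}
    (hC : IsBounded C) : (farGraph C).chromaticNumber ≠ ⊤ :=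
  (hC.isCompact_closure.totallyBounded.subset subset_closure).farGraph_chromaticNumber_ne_top

def farGraphUnionIso {C C' : Set E} [DecidablePred (· ∈ C)]
    (hCC' : ∀ x ∈ C, ∀ x' ∈ C', 2 ≤ dist x x') :
    graphJoin (farGraph C) (farGraph C') ≃g farGraph (C ∪ C') where
  toEquiv := (Equiv.Set.union (Set.disjoint_left.mpr fun x hx hx' => by
    linarith [hCC' x hx x hx', dist_self x])).symm
  map_rel_iff' {a b} := by
    rcases a with a | a <;> rcases b with b | b
    · exact farGraph_adj.trans (farGraph_adj (C := C)).symm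
    · exact iff_of_true (farGraph_adj.mpr (hCC' _ a.2 _ b.2)) trivial
    · exact iff_of_true (farGraph_adj.mpr (dist_comm (a : E) b ▸ hCC' _ b.2 _ a.2)) trivial
    · exact farGraph_adj.trans (farGraph_adj (C := C')).symm

end FarGraph

theorem nonempty_farGraph_hom_of_subset_thickening {E : Type} [NormedAddCommGroup E]
    [NormedSpace ℝ E] {ε : ℝ} (hε : 0 < ε) {C C' : Set E} (hCC' : C ⊆ thickening ε C') :
    Nonempty (farGraph ((1 / (1 + ε)) • C) →g farGraph C') := by
  have hnear (u : ((1 / (1 + ε)) • C : Set E)) : ∃ y : C', dist ((1 + ε) • (u : E)) y < ε := by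
    obtain ⟨x, hx, hxu⟩ := u.2
    rw [← hxu, smul_smul, mul_one_div_cancel (by positivity), one_smul]
    obtain ⟨y, hy, hxy⟩ := mem_thickening_iff.mp (hCC' hx)
    exact ⟨⟨y, hy⟩, hxy⟩
  choose f hf using hnear
  refine ⟨farGraphHom f fun u v huv => ?_⟩
  have hscaled : 2 * (1 + ε) ≤ dist ((1 + ε) • (u : E)) ((1 + ε) • (v : E)) := by
    rw [dist_smul₀, Real.norm_of_nonneg (by positivity), mul_comm]
    gcongr
  linarith [dist_triangle4 ((1 + ε) • (u : E)) (f u) (f v) ((1 + ε) • (v : E)), hf u, hf v,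
    dist_comm ((1 + ε) • (v : E)) (f v)]

namespace SandwichFunction

variable (Ψ : SandwichFunction) {V W : Type}

theorem toFun_eq_of_hom_of_hom {G : SimpleGraph V} {H : SimpleGraph W}
    (hH : H.chromaticNumber ≠ ⊤) (f : G →g H) (g : H →g G) : Ψ.toFun G = Ψ.toFun H :=
  have hG : G.chromaticNumber ≠ ⊤ :=
    ne_top_of_le_ne_top hH (SimpleGraph.chromaticNumber_mono_of_hom f)
  le_antisymm (Ψ.mono G H hG hH f) (Ψ.mono H G hH hG g)

theorem toFun_bot [Nonempty V] : Ψ.toFun (⊥ : SimpleGraph V) = 1 := by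
  have hUnit : (⊥ : SimpleGraph Unit).chromaticNumber ≠ ⊤ := by
    simp [SimpleGraph.chromaticNumber_bot]
  rw [Ψ.toFun_eq_of_hom_of_hom (G := ⊥) (H := ⊥) hUnit ⟨fun _ => (), fun h => h.elim⟩
    ⟨fun _ => Classical.arbitrary V, fun h => h.elim⟩]
  exact Ψ.single_eq _ inferInstance inferInstance

end SandwichFunction

/-- Every sandwich function `Ψ` gives a packing bound function via
`A(C) = Ψ(G(C))`, where `G(C)` is the graph on `C` with edges the pairs at distance at
least 2: this assignment satisfies the sphere bound, Lipschitz, union, and mesh axioms. -/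
theorem sandwichFunction_gives_packingBoundFunction (Ψ : SandwichFunction) :
    (∀ (d : ℕ) (C : Set (EuclideanSpace ℝ (Fin d))), IsBounded C → MeasurableSet C →
      C.Nonempty → (∃ z, C ⊆ Metric.ball z 1) → Ψ.toFun (farGraph C) = 1) ∧
    (∀ (d d' : ℕ) (C : Set (EuclideanSpace ℝ (Fin d)))
      (C' : Set (EuclideanSpace ℝ (Fin d'))),
      IsBounded C → MeasurableSet C → IsBounded C' → MeasurableSet C' →
      (∃ ψ : EuclideanSpace ℝ (Fin d) → EuclideanSpace ℝ (Fin d'),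
        (∀ x ∈ C, ψ x ∈ C') ∧ ∀ x ∈ C, ∀ y ∈ C, dist x y ≤ dist (ψ x) (ψ y)) →
      Ψ.toFun (farGraph C) ≤ Ψ.toFun (farGraph C')) ∧
    (∀ (d : ℕ) (C C' : Set (EuclideanSpace ℝ (Fin d))),
      IsBounded C → MeasurableSet C → IsBounded C' → MeasurableSet C' →
      (∀ x ∈ C, ∀ x' ∈ C', 2 ≤ dist x x') →
      Ψ.toFun (farGraph (C ∪ C')) = Ψ.toFun (farGraph C) + Ψ.toFun (farGraph C')) ∧
    (∀ (ε : ℝ), 0 < ε → ∀ (d : ℕ) (C C' : Set (EuclideanSpace ℝ (Fin d))),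
      IsBounded C → MeasurableSet C → IsBounded C' → MeasurableSet C' →
      C ⊆ Metric.thickening ε C' →
      Ψ.toFun (farGraph ((1 / (1 + ε)) • C)) ≤ Ψ.toFun (farGraph C')) := by
  classical
  refine ⟨?_, ?_, ?_, ?_⟩
  · rintro d C - - hC ⟨z, hz⟩
    have := hC.to_subtype
    rw [farGraph_eq_bot_of_subset_ball hz, Ψ.toFun_bot]
  · rintro d d' C C' hC - hC' - ⟨ψ, hψC', hψ⟩
    exact Ψ.mono _ _ hC.farGraph_chromaticNumber_ne_top hC'.farGraph_chromaticNumber_ne_top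
      (farGraphHom (fun x => ⟨ψ x, hψC' x x.2⟩) fun x y hxy => hxy.trans (hψ x x.2 y y.2))
  · rintro d C C' hC - hC' - hCC'
    let e := farGraphUnionIso hCC'
    rw [← Ψ.toFun_eq_of_hom_of_hom (hC.union hC').farGraph_chromaticNumber_ne_top e.toHom
      e.symm.toHom]
    exact Ψ.join_add _ _ hC.farGraph_chromaticNumber_ne_top hC'.farGraph_chromaticNumber_ne_top
  · rintro ε hε d C C' hC - hC' - hCC'
    obtain ⟨f⟩ := nonempty_farGraph_hom_of_subset_thickening hε hCC'
    exact Ψ.mono _ _ (hC.smul₀ _).farGraph_chromaticNumber_ne_top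
      hC'.farGraph_chromaticNumber_ne_top f
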